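/- The n×n matrix with rows indexed by i ∈ {1,...,n} and columns by j ∈ {1,...,n}, whose (i,j) entry is maxdiag(μ_i \ λ_j) if i = n and maxdiag(μ_i \ λ_j) + maxdiag(μ_i^T \ λ_j) otherwise — where μ_i is the i×n rectangle for i < n and the hook (n, 1^{n-1}) for i = n, and λ_j = (n^{n-j}, (n-1)^{j-1}) — equals the matrix with entries 1 if i = n, 1 if i ≠ n and j ≤ n - i, and 2 if i ≠ n and j > n - i. -/

import Mathlib

/-- `maxdiag S`: the maximal number of boxes of `S` on a single diagonal of slope `-1`. -/
def maxdiag (S : Finset (ℕ × ℕ)) : ℕ :=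
  S.sup fun p => (S.filter fun q => q.1 + p.2 = q.2 + p.1).card

/-- The boxes of the Young diagram of `f` inside the `n×n` square. -/
def boxesOf (n : ℕ) (f : ℕ → ℕ) : Finset (ℕ × ℕ) :=
  (Finset.Icc 1 n ×ˢ Finset.Icc 1 n).filter fun p => p.2 ≤ f p.1

/-- The hook partition `(a, 1^b)` as a function giving row lengths. -/
def hookFun (a b : ℕ) : ℕ → ℕ := fun s => if s = 1 then a else if s ≤ b + 1 then 1 else 0

/-- The partition `λ_j = (n^{n-j}, (n-1)^{j-1})`. -/
def lamJ (n j : ℕ) : ℕ → ℕ :=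
  fun r => if r ≤ n - j then n else if r ≤ n - 1 then n - 1 else 0

/-!
Inside the `n × n` square, the complement of `λ_j` is the last row together with the boxes of
the last column in rows `n - j < r < n`. Hence each skew shape in the matrix lies in a single row
or column, or (for the hook) in `{(1, n), (n, 1)}`, and such a set meets every diagonal in at most
one box: its `maxdiag` is `1` if it is nonempty and `0` otherwise. Only the rectangle `μ_i` can
miss the complement of `λ_j`, namely when `i ≤ n - j`.
-/

lemma mem_boxesOf {n : ℕ} {f : ℕ → ℕ} {p : ℕ × ℕ} :
    p ∈ boxesOf n f ↔ (1 ≤ p.1 ∧ p.1 ≤ n) ∧ (1 ≤ p.2 ∧ p.2 ≤ n) ∧ p.2 ≤ f p.1 := by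
  simp [boxesOf, and_assoc]

lemma le_lamJ_iff {n j r c : ℕ} (hj : 1 ≤ j) (hr : r ≤ n) (hc : c ≤ n) :
    c ≤ lamJ n j r ↔ c = 0 ∨ r < n ∧ (c < n ∨ r ≤ n - j) := by
  unfold lamJ
  split_ifs <;> omega

lemma maxdiag_eq_one {S : Finset (ℕ × ℕ)} (hne : S.Nonempty)
    (h : ∀ p ∈ S, ∀ q ∈ S, q.1 + p.2 = q.2 + p.1 → q = p) : maxdiag S = 1 := by
  unfold maxdiag
  apply le_antisymm
  · refine Finset.sup_le fun p hp => Finset.card_le_one.mpr fun a ha b hb => ?_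
    rw [Finset.mem_filter] at ha hb
    rw [h p hp a ha.1 ha.2, h p hp b hb.1 hb.2]
  · obtain ⟨p, hp⟩ := hne
    exact le_trans (Finset.card_pos.mpr ⟨p, Finset.mem_filter.mpr ⟨hp, Nat.add_comm p.1 p.2⟩⟩)
      (Finset.le_sup (f := fun p => (S.filter fun q => q.1 + p.2 = q.2 + p.1).card) hp)

lemma maxdiag_prod_singleton {s : Finset ℕ} (hs : s.Nonempty) (c : ℕ) :
    maxdiag (s ×ˢ {c}) = 1 :=
  maxdiag_eq_one (hs.product (Finset.singleton_nonempty c)) fun p hp q hq hpq => by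
    simp only [Finset.mem_product, Finset.mem_singleton] at hp hq
    ext <;> omega

lemma maxdiag_singleton_prod (r : ℕ) {s : Finset ℕ} (hs : s.Nonempty) :
    maxdiag ({r} ×ˢ s) = 1 :=
  maxdiag_eq_one ((Finset.singleton_nonempty r).product hs) fun p hp q hq hpq => by
    simp only [Finset.mem_product, Finset.mem_singleton] at hp hq
    ext <;> omega

lemma rect_sdiff_lamJ {n i j : ℕ} (hin : i < n) (hj : 1 ≤ j) :
    boxesOf n (fun r => if r ≤ i then n else 0) \ boxesOf n (lamJ n j) =
      Finset.Ioc (n - j) i ×ˢ {n} := by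
  ext ⟨r, c⟩
  simp only [Finset.mem_sdiff, mem_boxesOf, Finset.mem_product, Finset.mem_Ioc,
    Finset.mem_singleton]
  constructor
  · rintro ⟨⟨hr, hc, hle⟩, hnot⟩
    rw [le_lamJ_iff hj hr.2 hc.2] at hnot
    split_ifs at hle <;> omega
  · rintro ⟨hr, rfl⟩
    rw [le_lamJ_iff hj (by omega) le_rfl, if_pos hr.2]
    omega

lemma rectTranspose_sdiff_lamJ {n i j : ℕ} (hin : i < n) (hj : 1 ≤ j) :
    boxesOf n (fun r => if r ≤ n then i else 0) \ boxesOf n (lamJ n j) =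
      {n} ×ˢ Finset.Icc 1 i := by
  ext ⟨r, c⟩
  simp only [Finset.mem_sdiff, mem_boxesOf, Finset.mem_product, Finset.mem_Icc,
    Finset.mem_singleton]
  constructor
  · rintro ⟨⟨hr, hc, hle⟩, hnot⟩
    rw [le_lamJ_iff hj hr.2 hc.2] at hnot
    split_ifs at hle <;> omega
  · rintro ⟨rfl, hc⟩
    rw [le_lamJ_iff hj le_rfl (by omega), if_pos le_rfl]
    omega

lemma maxdiag_hook_sdiff_lamJ {n j : ℕ} (hn : 1 ≤ n) (hj : 1 ≤ j) :
    maxdiag (boxesOf n (hookFun n (n - 1)) \ boxesOf n (lamJ n j)) = 1 := by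
  have hsub : boxesOf n (hookFun n (n - 1)) \ boxesOf n (lamJ n j) ⊆ {(1, n), (n, 1)} := by
    rintro ⟨r, c⟩ hp
    rw [Finset.mem_sdiff, mem_boxesOf, mem_boxesOf, le_lamJ_iff hj (by omega) (by omega)] at hp
    simp only [hookFun] at hp
    simp only [Finset.mem_insert, Finset.mem_singleton, Prod.mk.injEq]
    split_ifs at hp <;> omega
  have hcorner : (n, 1) ∈ boxesOf n (hookFun n (n - 1)) \ boxesOf n (lamJ n j) := by
    refine Finset.mem_sdiff.mpr ⟨mem_boxesOf.mpr ?_, fun h => ?_⟩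
    · simp only [hookFun]
      split_ifs <;> omega
    · have := (le_lamJ_iff hj le_rfl hn).mp (mem_boxesOf.mp h).2.2
      omega
  refine maxdiag_eq_one ⟨_, hcorner⟩ fun p hp q hq hpq => ?_
  have hp := hsub hp
  have hq := hsub hq
  simp only [Finset.mem_insert, Finset.mem_singleton] at hp hq
  rcases hp with rfl | rfl <;> rcases hq with rfl | rfl <;> simp only [Prod.mk.injEq] at hpq ⊢ <;>
    omega

theorem stmt_11_general (n i j : ℕ) (hi1 : 1 ≤ i) (hin : i ≤ n) (hj1 : 1 ≤ j) :
    (if i = n then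
        maxdiag (boxesOf n (hookFun n (n - 1)) \ boxesOf n (lamJ n j))
      else
        maxdiag (boxesOf n (fun r => if r ≤ i then n else 0) \ boxesOf n (lamJ n j)) +
          maxdiag (boxesOf n (fun r => if r ≤ n then i else 0) \ boxesOf n (lamJ n j))) =
      (if i = n then 1 else if j ≤ n - i then 1 else 2) := by
  rcases eq_or_ne i n with rfl | hi
  · simp only [if_true]
    exact maxdiag_hook_sdiff_lamJ hi1 hj1
  have hin : i < n := lt_of_le_of_ne hin hi
  rw [if_neg hi, if_neg hi, rect_sdiff_lamJ hin hj1, rectTranspose_sdiff_lamJ hin hj1,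
    maxdiag_singleton_prod n ⟨i, Finset.mem_Icc.mpr ⟨hi1, le_rfl⟩⟩]
  split_ifs with hji
  · rw [Finset.Ioc_eq_empty (by omega), Finset.empty_product]
    rfl
  · rw [maxdiag_prod_singleton ⟨i, Finset.mem_Ioc.mpr ⟨by omega, le_rfl⟩⟩]

/-- The matrix of valuations: the `(i,j)` entry (1-based) is
`maxdiag(μ_i \ λ_j)` for `i = n` and `maxdiag(μ_i \ λ_j) + maxdiag(μ_i^T \ λ_j)`
otherwise, where `μ_i` is the `i×n` rectangle for `i < n` and the hook `(n,1^{n-1})` for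
`i = n`, and `λ_j = (n^{n-j}, (n-1)^{j-1})`. It equals the matrix with entries `1` if
`i = n`, `1` if `i ≠ n` and `j ≤ n - i`, and `2` if `i ≠ n` and `j > n - i`. -/
theorem stmt_11 (n i j : ℕ) (hi1 : 1 ≤ i) (hin : i ≤ n) (hj1 : 1 ≤ j) (hjn : j ≤ n) :
    (if i = n then
        maxdiag (boxesOf n (hookFun n (n - 1)) \ boxesOf n (lamJ n j))
      else
        maxdiag (boxesOf n (fun r => if r ≤ i then n else 0) \ boxesOf n (lamJ n j)) +
          maxdiag (boxesOf n (fun r => if r ≤ n then i else 0) \ boxesOf n (lamJ n j))) =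
      (if i = n then 1 else if j ≤ n - i then 1 else 2) :=
  stmt_11_general n i j hi1 hin hj1
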